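/- arXiv:2207.11274 — 3 statements merged into one kernel-verified Lean document; each statement's English description precedes it below -/
import Mathlib

section
/- Let H(R) be a smooth family of Hermitian operators on a finite-dimensional complex inner product space, with a smooth family of normalized eigenvectors v(R) and corresponding eigenvalues λ(R), so H(R)v(R) = λ(R)v(R). Then the derivative of the eigenvalue satisfies ∂λ/∂R_k = ⟨v(R), (∂H/∂R_k) v(R)⟩ (the Hellmann–Feynman theorem). -/
open scoped ComplexInnerProductSpace

/-- **Hellmann–Feynman theorem.** For a smooth family `H : ℝ^N → Herm(ℂ^n)` with smooth
normalized eigenvector family `v` and eigenvalue family `lam`, the partial derivative of the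
eigenvalue in the `k`-th coordinate direction is `⟨v(R), (∂H/∂R_k) v(R)⟩`. -/
theorem hellmann_feynman {N n : ℕ}
    (H : EuclideanSpace ℝ (Fin N) → (EuclideanSpace ℂ (Fin n) →L[ℂ] EuclideanSpace ℂ (Fin n)))
    (v : EuclideanSpace ℝ (Fin N) → EuclideanSpace ℂ (Fin n))
    (lam : EuclideanSpace ℝ (Fin N) → ℝ)
    (hH : ContDiff ℝ (⊤ : ℕ∞) H) (hHerm : ∀ R, IsSelfAdjoint (H R))
    (hv : ContDiff ℝ (⊤ : ℕ∞) v) (hnorm : ∀ R, ‖v R‖ = 1)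
    (hlam : ContDiff ℝ (⊤ : ℕ∞) lam)
    (heig : ∀ R, (H R) (v R) = (lam R : ℂ) • v R)
    (R : EuclideanSpace ℝ (Fin N)) (k : Fin N) :
    ((fderiv ℝ lam R (EuclideanSpace.single k (1 : ℝ)) : ℝ) : ℂ) =
      ⟪v R, (fderiv ℝ H R (EuclideanSpace.single k (1 : ℝ))) (v R)⟫ := by
  classical
  set e := EuclideanSpace.single k (1 : ℝ) with he
  -- restrict scalars of H to ℝ
  set L := ContinuousLinearMap.restrictScalarsL ℂ (EuclideanSpace ℂ (Fin n))
      (EuclideanSpace ℂ (Fin n)) ℝ ℝ with hL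
  set Hr : EuclideanSpace ℝ (Fin N) →
      (EuclideanSpace ℂ (Fin n) →L[ℝ] EuclideanSpace ℂ (Fin n)) :=
    fun R => (H R).restrictScalars ℝ with hHrdef
  have hvd : HasFDerivAt v (fderiv ℝ v R) R :=
    ((hv.differentiable (by simp)) R).hasFDerivAt
  have hHd : HasFDerivAt H (fderiv ℝ H R) R :=
    ((hH.differentiable (by simp)) R).hasFDerivAt
  have hlamd : HasFDerivAt lam (fderiv ℝ lam R) R :=
    ((hlam.differentiable (by simp)) R).hasFDerivAt
  have hHrd : HasFDerivAt Hr (L.comp (fderiv ℝ H R)) R :=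
    L.hasFDerivAt.comp R hHd
  set v' := fderiv ℝ v R with hv'
  set H' := fderiv ℝ H R with hH'
  -- derivative of R ↦ H R (v R)
  have hHvd : HasFDerivAt (fun R => (Hr R) (v R))
      ((Hr R).comp v' + (L.comp H').flip (v R)) R := hHrd.clm_apply hvd
  -- derivative of the inner product ⟪v, H v⟫
  have hgd := hvd.inner ℂ hHvd
  -- the function ⟪v, H v⟫ equals lam coerced to ℂ
  have hgeq : (fun t => ⟪v t, (Hr t) (v t)⟫) = fun t => ((lam t : ℝ) : ℂ) := by
    funext t
    have : (Hr t) (v t) = (lam t : ℂ) • v t := heig t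
    rw [this, inner_smul_right, inner_self_eq_norm_sq_to_K, hnorm t]
    norm_num
  have hgd2 : HasFDerivAt (fun t => ⟪v t, (Hr t) (v t)⟫)
      (Complex.ofRealCLM.comp (fderiv ℝ lam R)) R := by
    rw [hgeq]
    exact Complex.ofRealCLM.hasFDerivAt.comp R hlamd
  have huniq := hgd.unique hgd2
  have hkey : ⟪v R, (Hr R) (v' e) + (L (H' e)) (v R)⟫ + ⟪v' e, (Hr R) (v R)⟫
      = ((fderiv ℝ lam R e : ℝ) : ℂ) :=
    ContinuousLinearMap.ext_iff.mp huniq e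
  -- norm constraint: ⟪v', v⟫ + ⟪v, v'⟫ = 0
  have hconst : HasFDerivAt (fun t => (⟪v t, v t⟫ : ℂ)) (0 : EuclideanSpace ℝ (Fin N) →L[ℝ] ℂ) R := by
    have : (fun t => (⟪v t, v t⟫ : ℂ)) = fun _ => (1 : ℂ) := by
      funext t
      rw [inner_self_eq_norm_sq_to_K, hnorm t]; norm_num
    rw [this]; exact hasFDerivAt_const 1 R
  have hnd := hvd.inner ℂ hvd
  have h0 : ⟪v R, v' e⟫ + ⟪v' e, v R⟫ = (0 : ℂ) :=
    ContinuousLinearMap.ext_iff.mp (hnd.unique hconst) e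
  -- symmetry of H R
  have hsym := (hHerm R).isSymmetric
  have hHv : (Hr R) (v R) = (lam R : ℂ) • v R := heig R
  have h1 : ⟪v' e, (Hr R) (v R)⟫ = (lam R : ℂ) * ⟪v' e, v R⟫ := by
    rw [hHv, inner_smul_right]
  have h2 : ⟪v R, (Hr R) (v' e)⟫ = (lam R : ℂ) * ⟪v R, v' e⟫ := by
    have : ⟪v R, (Hr R) (v' e)⟫ = ⟪(H R) (v R), v' e⟫ := (hsym (v R) (v' e)).symm
    rw [this, heig R, inner_smul_left, Complex.conj_ofReal]
  have hsum : (Hr R) (v' e) + (L (H' e)) (v R) = (Hr R) (v' e) + (H' e) (v R) := rfl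
  rw [hsum, inner_add_right, h1, h2] at hkey
  rw [← hkey]
  linear_combination (lam R : ℂ) * h0
end

section
/- Let H(R) be a smooth family of Hermitian operators, and let φ, ψ : ℝ^N → ℂ^n be two smooth unit-vector families such that at a point R₀: (a) φ(R₀) = ψ(R₀) is an eigenvector of H(R₀), and (b) all partial derivatives of φ and ψ of orders 1 through n−1 agree at R₀. Define E_φ(R) = ⟨φ(R), H(R)φ(R)⟩ and E_ψ(R) = ⟨ψ(R), H(R)ψ(R)⟩. Then all partial derivatives of E_φ and E_ψ of order up to n agree at R₀. -/
open scoped ComplexInnerProductSpace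

section Aux

variable {D E F G : Type*} [NormedAddCommGroup D] [NormedSpace ℝ D]
  [NormedAddCommGroup E] [NormedSpace ℝ E] [NormedAddCommGroup F] [NormedSpace ℝ F]
  [NormedAddCommGroup G] [NormedSpace ℝ G]

/-- If all derivatives of `f` up to order `k` vanish at `x`, and `g x = 0`, then all derivatives
of the bilinear pairing `B (f ·) (g ·)` up to order `k + 1` vanish at `x`. -/
lemma bilinear_vanish (B : E →L[ℝ] F →L[ℝ] G) {f : D → E} {g : D → F}
    (hf : ContDiff ℝ (⊤ : ℕ∞) f) (hg : ContDiff ℝ (⊤ : ℕ∞) g) (x : D) (k : ℕ)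
    (hf0 : ∀ i ≤ k, iteratedFDeriv ℝ i f x = 0) (hg0 : g x = 0) :
    ∀ p ≤ k + 1, iteratedFDeriv ℝ p (fun y => B (f y) (g y)) x = 0 := by
  intro p hp
  rw [← norm_eq_zero]
  have hb := B.norm_iteratedFDeriv_le_of_bilinear hf hg x (n := p) (by exact_mod_cast le_top)
  have hsum : ∑ i ∈ Finset.range (p + 1),
      (p.choose i : ℝ) * ‖iteratedFDeriv ℝ i f x‖ * ‖iteratedFDeriv ℝ (p - i) g x‖ = 0 := by
    apply Finset.sum_eq_zero
    intro i hi
    rcases le_or_gt i k with h | h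
    · rw [hf0 i h, norm_zero, mul_zero, zero_mul]
    · have hik : p - i = 0 := by
        have : i ≤ p := Nat.lt_succ_iff.mp (Finset.mem_range.mp hi)
        omega
      rw [hik, norm_iteratedFDeriv_zero, hg0, norm_zero, mul_zero]
  have hle := hb.trans (le_of_eq (by rw [hsum, mul_zero]))
  exact le_antisymm hle (norm_nonneg _)

end Aux

/-- **Corollary 1 of the paper.** If two smooth unit-vector families `φ` and `ψ` agree, together
with all their partial derivatives up to order `n − 1`, at a point `R₀` where their common value
is an eigenvector of `H(R₀)`, then the energy expectation values
`E_φ(R) = ⟨φ(R), H(R)φ(R)⟩` and `E_ψ(R) = ⟨ψ(R), H(R)ψ(R)⟩` have equal partial derivatives of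
all orders up to `n` at `R₀`. -/
theorem energy_derivatives_agree {N dim : ℕ} (n : ℕ) (hn : 1 ≤ n)
    (H : EuclideanSpace ℝ (Fin N) → (EuclideanSpace ℂ (Fin dim) →L[ℂ] EuclideanSpace ℂ (Fin dim)))
    (φ ψ : EuclideanSpace ℝ (Fin N) → EuclideanSpace ℂ (Fin dim))
    (R₀ : EuclideanSpace ℝ (Fin N)) (c : ℂ)
    (hH : ContDiff ℝ (⊤ : ℕ∞) H) (hHerm : ∀ R, IsSelfAdjoint (H R))
    (hφ : ContDiff ℝ (⊤ : ℕ∞) φ) (hψ : ContDiff ℝ (⊤ : ℕ∞) ψ)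
    (hφnorm : ∀ R, ‖φ R‖ = 1) (hψnorm : ∀ R, ‖ψ R‖ = 1)
    (heq : φ R₀ = ψ R₀)
    (heig : (H R₀) (φ R₀) = c • φ R₀)
    (hders : ∀ p ≤ n - 1, iteratedFDeriv ℝ p φ R₀ = iteratedFDeriv ℝ p ψ R₀) :
    ∀ p ≤ n,
      iteratedFDeriv ℝ p (fun R => ⟪φ R, (H R) (φ R)⟫) R₀ =
        iteratedFDeriv ℝ p (fun R => ⟪ψ R, (H R) (ψ R)⟫) R₀ := by
  classical
  -- self-adjointness in inner-product form
  have hsa : ∀ R (v w : EuclideanSpace ℂ (Fin dim)), ⟪v, H R w⟫ = ⟪H R v, w⟫ := by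
    intro R v w
    calc ⟪v, H R w⟫ = ⟪ContinuousLinearMap.adjoint (H R) v, w⟫ :=
          (ContinuousLinearMap.adjoint_inner_left _ _ _).symm
      _ = ⟪H R v, w⟫ := by rw [(hHerm R).adjoint_eq]
  -- `c` is real
  have hcre : (starRingEnd ℂ) c = c := by
    have h1 : ⟪φ R₀, (H R₀) (φ R₀)⟫ = c := by
      rw [heig, inner_smul_right, inner_self_eq_norm_sq_to_K, hφnorm]
      norm_num
    have h2 : (starRingEnd ℂ) ⟪φ R₀, (H R₀) (φ R₀)⟫ = ⟪φ R₀, (H R₀) (φ R₀)⟫ := by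
      rw [inner_conj_symm, hsa]
    rw [h1] at h2; exact h2
  -- the shifted operator
  set G : EuclideanSpace ℝ (Fin N) →
      (EuclideanSpace ℂ (Fin dim) →L[ℂ] EuclideanSpace ℂ (Fin dim)) :=
    fun R => H R - c • 1 with hG
  have hGeval : ∀ R v, G R v = H R v - c • v := by intro R v; simp [hG]
  have hGφ₀ : G R₀ (φ R₀) = 0 := by rw [hGeval, heig, sub_self]
  have hGψ₀ : G R₀ (ψ R₀) = 0 := by rw [← heq]; exact hGφ₀
  have hGcd : ContDiff ℝ (⊤ : ℕ∞) G := by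
    apply hH.sub contDiff_const
  -- the real-bilinear inner product
  set B : EuclideanSpace ℂ (Fin dim) →L[ℝ] EuclideanSpace ℂ (Fin dim) →L[ℝ] ℂ :=
    (isBoundedBilinearMap_inner (𝕜 := ℂ)).toContinuousLinearMap with hB
  have hBeval : ∀ v w : EuclideanSpace ℂ (Fin dim), B v w = ⟪v, w⟫ := fun v w => rfl
  -- the difference function
  set u : EuclideanSpace ℝ (Fin N) → EuclideanSpace ℂ (Fin dim) := φ - ψ with hu
  have hucd : ContDiff ℝ (⊤ : ℕ∞) u := hφ.sub hψ
  have hu0 : ∀ i ≤ n - 1, iteratedFDeriv ℝ i u R₀ = 0 := by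
    intro i hi
    have hgneg : ContDiff ℝ (i : ℕ∞) (-ψ) := (hψ.of_le (by exact_mod_cast le_top)).neg
    rw [hu, sub_eq_add_neg, iteratedFDeriv_add_apply (hφ.of_le (by exact_mod_cast le_top)).contDiffAt hgneg.contDiffAt,
      iteratedFDeriv_neg_apply, hders i hi, add_neg_cancel]
  -- smoothness of auxiliary functions
  have hGcd' : ContDiff ℝ (⊤ : ℕ∞) (fun R => ((ContinuousLinearMap.restrictScalarsIsometry ℂ
      (EuclideanSpace ℂ (Fin dim)) (EuclideanSpace ℂ (Fin dim)) ℝ ℝ).toContinuousLinearMap) (G R)) :=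
    by exact (ContinuousLinearMap.restrictScalarsIsometry ℂ _ _ ℝ ℝ).toContinuousLinearMap.contDiff.comp hGcd
  have hHcd' : ContDiff ℝ (⊤ : ℕ∞) (fun R => ((ContinuousLinearMap.restrictScalarsIsometry ℂ
      (EuclideanSpace ℂ (Fin dim)) (EuclideanSpace ℂ (Fin dim)) ℝ ℝ).toContinuousLinearMap) (H R)) :=
    by exact (ContinuousLinearMap.restrictScalarsIsometry ℂ _ _ ℝ ℝ).toContinuousLinearMap.contDiff.comp hH
  have hGφcd : ContDiff ℝ (⊤ : ℕ∞) (fun R => G R (φ R)) := hGcd'.clm_apply hφ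
  have hGψcd : ContDiff ℝ (⊤ : ℕ∞) (fun R => G R (ψ R)) := hGcd'.clm_apply hψ
  have hHψcd : ContDiff ℝ (⊤ : ℕ∞) (fun R => H R (ψ R)) := hHcd'.clm_apply hψ
  -- the key algebraic identity
  have hkey : (fun R => ⟪φ R, H R (φ R)⟫) =
      ((fun R => ⟪ψ R, H R (ψ R)⟫) + fun R => B (u R) (G R (φ R)))
        + fun R => B.flip (u R) (G R (ψ R)) := by
    funext R
    simp only [Pi.add_apply, hBeval, ContinuousLinearMap.flip_apply, hGeval, hu, Pi.sub_apply]
    have hnφ : ⟪φ R, φ R⟫ = (1 : ℂ) := by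
      rw [inner_self_eq_norm_sq_to_K, hφnorm]; norm_num
    have hnψ : ⟪ψ R, ψ R⟫ = (1 : ℂ) := by
      rw [inner_self_eq_norm_sq_to_K, hψnorm]; norm_num
    simp only [inner_sub_left, inner_sub_right, inner_smul_right, inner_smul_left, hcre]
    rw [hsa R (ψ R) (φ R), ← hsa R (ψ R) (ψ R)]
    rw [hnφ, hnψ]
    ring
  -- the two correction terms have vanishing derivatives up to order n
  have hterm1 : ∀ p ≤ n, iteratedFDeriv ℝ p (fun R => B (u R) (G R (φ R))) R₀ = 0 := by
    intro p hp
    apply bilinear_vanish B hucd hGφcd R₀ (n - 1) hu0 hGφ₀ p (by omega)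
  have hterm2 : ∀ p ≤ n, iteratedFDeriv ℝ p (fun R => B.flip (u R) (G R (ψ R))) R₀ = 0 := by
    intro p hp
    apply bilinear_vanish B.flip hucd hGψcd R₀ (n - 1) hu0 hGψ₀ p (by omega)
  intro p hp
  rw [hkey]
  have hEψcd : ContDiff ℝ (p : ℕ∞) (fun R => ⟪ψ R, H R (ψ R)⟫) :=
    by exact ((B.isBoundedBilinearMap.contDiff).comp (hψ.prodMk hHψcd)).of_le (by exact_mod_cast le_top)
  have hT1 : ContDiff ℝ (p : ℕ∞) (fun R => B (u R) (G R (φ R))) :=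
    ((B.isBoundedBilinearMap.contDiff).comp ((hucd.prodMk hGφcd))).of_le (by exact_mod_cast le_top)
  have hT2 : ContDiff ℝ (p : ℕ∞) (fun R => B.flip (u R) (G R (ψ R))) :=
    ((B.flip.isBoundedBilinearMap.contDiff).comp ((hucd.prodMk hGψcd))).of_le (by exact_mod_cast le_top)
  have hsum1 : ContDiff ℝ (p : ℕ∞)
      ((fun R => ⟪ψ R, H R (ψ R)⟫) + fun R => B (u R) (G R (φ R))) := by exact hEψcd.add hT1
  rw [iteratedFDeriv_add_apply hsum1.contDiffAt hT2.contDiffAt,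
    iteratedFDeriv_add_apply hEψcd.contDiffAt hT1.contDiffAt, hterm1 p hp, hterm2 p hp, add_zero, add_zero]
end

section
/- Let H : ℝ → Hermitian n×n matrices be smooth with non-degenerate spectrum in a neighborhood of R₀, and let H_{n−1}(R) be its Taylor polynomial of degree n−1 centered at R₀. Let ψ₀(R) and φ(R) be smooth normalized ground states (eigenvectors of the smallest eigenvalue, with a real-gauge phase convention) of H(R) and H_{n−1}(R) respectively. Then the derivatives of ψ₀ and φ of all orders up to n−1 agree at R₀. -/
open scoped ComplexInnerProductSpace ContDiff

section Aux

variable {F E G : Type*} [NormedAddCommGroup F] [NormedSpace ℝ F]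
  [NormedAddCommGroup E] [NormedSpace ℝ E] [NormedAddCommGroup G] [NormedSpace ℝ G]

theorem hasDerivAt_iteratedDeriv {f : ℝ → F} (hf : ContDiff ℝ ∞ f) (k : ℕ) (x : ℝ) :
    HasDerivAt (iteratedDeriv k f) (iteratedDeriv (k + 1) f x) x := by
  rw [iteratedDeriv_succ]
  exact ((hf.differentiable_iteratedDeriv k (by exact_mod_cast WithTop.coe_lt_top k)) x).hasDerivAt

theorem iteratedDeriv_clm_comp_left (L : F →L[ℝ] G) {f : ℝ → F}
    (hf : ContDiff ℝ ∞ f) (p : ℕ) (x : ℝ) :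
    iteratedDeriv p (fun y => L (f y)) x = L (iteratedDeriv p f x) := by
  induction p generalizing x with
  | zero => simp
  | succ p ih =>
    rw [iteratedDeriv_succ]
    have h1 : iteratedDeriv p (fun y => L (f y)) = fun y => L (iteratedDeriv p f y) :=
      funext fun y => ih y
    rw [h1]
    exact (L.hasFDerivAt.comp_hasDerivAt x (hasDerivAt_iteratedDeriv hf p x)).deriv

theorem iteratedDeriv_bilinear (B : F →L[ℝ] E →L[ℝ] G) {f : ℝ → F} {g : ℝ → E}
    (hf : ContDiff ℝ ∞ f) (hg : ContDiff ℝ ∞ g) (p : ℕ) (x : ℝ) :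
    iteratedDeriv p (fun y => B (f y) (g y)) x
      = ∑ k ∈ Finset.range (p + 1),
          (p.choose k : ℝ) • B (iteratedDeriv k f x) (iteratedDeriv (p - k) g x) := by
  induction p generalizing x with
  | zero => simp
  | succ p ih =>
    rw [iteratedDeriv_succ]
    have h1 : iteratedDeriv p (fun y => B (f y) (g y)) = fun y =>
        ∑ k ∈ Finset.range (p + 1),
          (p.choose k : ℝ) • B (iteratedDeriv k f y) (iteratedDeriv (p - k) g y) :=
      funext fun y => ih y
    rw [h1]
    have hD : HasDerivAt (fun y => ∑ k ∈ Finset.range (p + 1),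
        (p.choose k : ℝ) • B (iteratedDeriv k f y) (iteratedDeriv (p - k) g y))
        (∑ k ∈ Finset.range (p + 1), (p.choose k : ℝ) •
          (B (iteratedDeriv (k + 1) f x) (iteratedDeriv (p - k) g x)
            + B (iteratedDeriv k f x) (iteratedDeriv (p - k + 1) g x))) x := by
      apply HasDerivAt.fun_sum
      intro k _
      have hc : HasDerivAt (fun y => B (iteratedDeriv k f y)) (B (iteratedDeriv (k + 1) f x)) x :=
        B.hasFDerivAt.comp_hasDerivAt x (hasDerivAt_iteratedDeriv hf k x)
      exact (hc.clm_apply (hasDerivAt_iteratedDeriv hg (p - k) x)).const_smul _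
    rw [hD.deriv]
    have hsplit : ∑ k ∈ Finset.range (p + 1), (p.choose k : ℝ) •
          (B (iteratedDeriv (k + 1) f x) (iteratedDeriv (p - k) g x)
            + B (iteratedDeriv k f x) (iteratedDeriv (p - k + 1) g x))
        = (∑ k ∈ Finset.range (p + 1), (p.choose k : ℝ) •
            B (iteratedDeriv (k + 1) f x) (iteratedDeriv (p - k) g x))
          + ∑ k ∈ Finset.range (p + 1), (p.choose k : ℝ) •
            B (iteratedDeriv k f x) (iteratedDeriv (p + 1 - k) g x) := by
      rw [← Finset.sum_add_distrib]
      refine Finset.sum_congr rfl fun k hk => ?_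
      rw [Finset.mem_range] at hk
      have h2 : p - k + 1 = p + 1 - k := by omega
      rw [smul_add, h2]
    rw [hsplit]
    rw [Finset.sum_range_succ' (fun k => (p.choose k : ℝ) •
        B (iteratedDeriv k f x) (iteratedDeriv (p + 1 - k) g x)) p]
    rw [Finset.sum_range_succ' (fun k => ((p + 1).choose k : ℝ) •
        B (iteratedDeriv k f x) (iteratedDeriv (p + 1 - k) g x)) (p + 1)]
    have hext : ∑ k ∈ Finset.range p, (p.choose (k + 1) : ℝ) •
          B (iteratedDeriv (k + 1) f x) (iteratedDeriv (p + 1 - (k + 1)) g x)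
        = ∑ k ∈ Finset.range (p + 1), (p.choose (k + 1) : ℝ) •
          B (iteratedDeriv (k + 1) f x) (iteratedDeriv (p + 1 - (k + 1)) g x) := by
      rw [Finset.sum_range_succ]
      simp [Nat.choose_succ_self]
    rw [hext, ← add_assoc, ← Finset.sum_add_distrib]
    congr 1
    · refine Finset.sum_congr rfl fun k hk => ?_
      rw [Finset.mem_range] at hk
      rw [show p + 1 - (k + 1) = p - k from by omega, ← add_smul]
      congr 1
      rw [Nat.choose_succ_succ]
      push_cast
      ring
    · simp

theorem iteratedDeriv_smul_const' {s : ℝ → ℝ} (hs : ContDiff ℝ ∞ s) (c : F) (p : ℕ) (x : ℝ) :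
    iteratedDeriv p (fun y => s y • c) x = iteratedDeriv p s x • c := by
  induction p generalizing s x with
  | zero => simp
  | succ p ih =>
    rw [iteratedDeriv_succ', iteratedDeriv_succ']
    have h1 : deriv (fun y => s y • c) = fun y => deriv s y • c := by
      funext y
      have hd : DifferentiableAt ℝ s y :=
        (hs.differentiable (by simp)) y
      exact (hd.hasDerivAt.smul_const c).deriv
    rw [h1]
    exact ih (contDiff_infty_iff_deriv.1 hs).2 x

theorem iteratedDeriv_const_fun (c : F) (p : ℕ) (x : ℝ) :
    iteratedDeriv p (fun _ : ℝ => c) x = if p = 0 then c else 0 := by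
  induction p generalizing c x with
  | zero => simp
  | succ p ih =>
    rw [iteratedDeriv_succ']
    have h : deriv (fun _ : ℝ => c) = fun _ : ℝ => (0 : F) := funext fun y => deriv_const y c
    rw [h, ih]
    simp

theorem iteratedDeriv_add' {f g : ℝ → F} (hf : ContDiff ℝ ∞ f) (hg : ContDiff ℝ ∞ g)
    (p : ℕ) (x : ℝ) :
    iteratedDeriv p (fun y => f y + g y) x = iteratedDeriv p f x + iteratedDeriv p g x := by
  have h1 : (fun y => f y + g y) = f + g := rfl
  rw [h1, ← iteratedDerivWithin_univ, ← iteratedDerivWithin_univ, ← iteratedDerivWithin_univ]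
  exact iteratedDerivWithin_add (Set.mem_univ x) uniqueDiffOn_univ
    (hf.contDiffWithinAt.of_le (by exact_mod_cast le_top))
    (hg.contDiffWithinAt.of_le (by exact_mod_cast le_top))

theorem iteratedDeriv_finset_sum {ι : Type*} (s : Finset ι) {f : ι → ℝ → F}
    (hf : ∀ i ∈ s, ContDiff ℝ ∞ (f i)) (p : ℕ) (x : ℝ) :
    iteratedDeriv p (fun y => ∑ i ∈ s, f i y) x = ∑ i ∈ s, iteratedDeriv p (f i) x := by
  classical
  induction s using Finset.induction with
  | empty =>
    simp only [Finset.sum_empty]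
    rw [iteratedDeriv_const_fun]
    split <;> simp
  | insert _ _ hni ih =>
    rename_i a t
    simp only [Finset.sum_insert hni]
    rw [iteratedDeriv_add' (hf a (Finset.mem_insert_self a t))
      (ContDiff.sum fun i hi => hf i (Finset.mem_insert_of_mem hi)),
      ih (fun i hi => hf i (Finset.mem_insert_of_mem hi))]

theorem iteratedDeriv_centered_pow (R₀ : ℝ) (j k : ℕ) :
    iteratedDeriv k (fun R : ℝ => (R - R₀) ^ j) R₀ = if k = j then (j.factorial : ℝ) else 0 := by
  induction k generalizing j with
  | zero =>
    simp only [iteratedDeriv_zero, sub_self]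
    rcases Nat.eq_zero_or_pos j with h | h
    · subst h; simp
    · rw [zero_pow (by omega), if_neg (by omega)]
  | succ k ih =>
    rw [iteratedDeriv_succ']
    rcases j with _ | j'
    · have h : (fun R : ℝ => (R - R₀) ^ 0) = fun _ : ℝ => (1 : ℝ) := by funext R; simp
      have h2 : deriv (fun _ : ℝ => (1 : ℝ)) = fun _ : ℝ => (0 : ℝ) :=
        funext fun y => deriv_const y 1
      rw [h, h2, iteratedDeriv_const_fun]
      simp
    · have hder : deriv (fun R : ℝ => (R - R₀) ^ (j' + 1))
          = fun R => ((j' : ℝ) + 1) * (R - R₀) ^ j' := by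
        funext R
        have hd : HasDerivAt (fun R : ℝ => (R - R₀) ^ (j' + 1))
            (((j' + 1 : ℕ) : ℝ) * (R - R₀) ^ (j' + 1 - 1) * 1) R :=
          ((hasDerivAt_id R).sub_const R₀).pow (j' + 1)
        rw [hd.deriv]
        push_cast
        ring_nf
      rw [hder]
      have hL : ∀ x : ℝ, iteratedDeriv k (fun R : ℝ => ((j' : ℝ) + 1) * (R - R₀) ^ j') x
          = ((j' : ℝ) + 1) * iteratedDeriv k (fun R : ℝ => (R - R₀) ^ j') x := by
        intro x
        have hpow : ContDiff ℝ ∞ (fun R : ℝ => (R - R₀) ^ j') :=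
          (contDiff_id.sub contDiff_const).pow j'
        have := iteratedDeriv_clm_comp_left
          ((((j' : ℝ) + 1)) • ContinuousLinearMap.id ℝ ℝ) hpow k x
        simpa using this
      rw [hL, ih]
      by_cases h : k = j'
      · subst h
        rw [if_pos rfl, if_pos rfl, Nat.factorial_succ]
        push_cast
        ring
      · rw [if_neg h, if_neg (by omega)]
        ring

end Aux

section Bil
variable (E : Type*) [NormedAddCommGroup E] [InnerProductSpace ℂ E]

noncomputable def clmApplyR : (E →L[ℂ] E) →L[ℝ] E →L[ℝ] E :=
  LinearMap.mkContinuous₂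
    (LinearMap.mk₂ ℝ (fun (A : E →L[ℂ] E) (x : E) => A x)
      (fun A B x => by simp)
      (fun c A x => by simp)
      (fun A x y => by simp)
      (fun c A x => by simp))
    1 (fun A x => by simpa using A.le_opNorm x)

@[simp] lemma clmApplyR_apply (A : E →L[ℂ] E) (x : E) : clmApplyR E A x = A x := rfl

noncomputable def smulR : ℂ →L[ℝ] E →L[ℝ] E :=
  LinearMap.mkContinuous₂
    (LinearMap.mk₂ ℝ (fun (c : ℂ) (x : E) => c • x)
      (fun a b x => add_smul a b x)
      (fun r a x => smul_assoc r a x)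
      (fun a x y => smul_add a x y)
      (fun r a x => smul_comm a r x))
    1 (fun a x => by simp [norm_smul])

@[simp] lemma smulR_apply (c : ℂ) (x : E) : smulR E c x = c • x := rfl

noncomputable def innerR : E →L[ℝ] E →L[ℝ] ℂ :=
  LinearMap.mkContinuous₂
    (LinearMap.mk₂ ℝ (fun x y : E => ⟪x, y⟫)
      (fun x x' y => inner_add_left x x' y)
      (fun r x y => by rw [show r • x = ((r : ℝ) : ℂ) • x from (Complex.coe_smul r x).symm]; exact inner_smul_real_left (𝕜 := ℂ) x y r)
      (fun x y y' => inner_add_right x y y')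
      (fun r x y => by rw [show r • y = ((r : ℝ) : ℂ) • y from (Complex.coe_smul r y).symm]; exact inner_smul_real_right (𝕜 := ℂ) x y r))
    1 (fun x y => by simpa using norm_inner_le_norm (𝕜 := ℂ) x y)

@[simp] lemma innerR_apply (x y : E) : innerR E x y = ⟪x, y⟫ := rfl

end Bil

set_option maxHeartbeats 2000000 in
set_option synthInstance.maxHeartbeats 1000000 in
/-- **Lemma 2 of the paper.** -/
theorem taylor_ground_state_derivatives_agree {dim : ℕ} (n : ℕ) (hn : 1 ≤ n)
    (H Hm : ℝ → (EuclideanSpace ℂ (Fin dim) →L[ℂ] EuclideanSpace ℂ (Fin dim)))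
    (ψ₀ φ : ℝ → EuclideanSpace ℂ (Fin dim))
    (lamH lamT : ℝ → ℝ) (R₀ δ : ℝ) (hδ : 0 < δ)
    (hH : ContDiff ℝ (⊤ : ℕ∞) H) (hHerm : ∀ R, IsSelfAdjoint (H R))
    (hHm : ∀ R, Hm R = ∑ k ∈ Finset.range n,
      (((R - R₀) ^ k / (Nat.factorial k : ℝ)) : ℝ) • iteratedDeriv k H R₀)
    (hψ₀ : ContDiff ℝ (⊤ : ℕ∞) ψ₀) (hφ : ContDiff ℝ (⊤ : ℕ∞) φ)
    (hψ₀norm : ∀ R, ‖ψ₀ R‖ = 1) (hφnorm : ∀ R, ‖φ R‖ = 1)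
    (heigH : ∀ R, (H R) (ψ₀ R) = (lamH R : ℂ) • ψ₀ R)
    (heigT : ∀ R, (Hm R) (φ R) = (lamT R : ℂ) • φ R)
    (hgroundH : ∀ R μ, Module.End.HasEigenvalue ((H R) : Module.End ℂ (EuclideanSpace ℂ (Fin dim)))
      (μ : ℂ) → ∀ hμ : μ.im = 0, lamH R ≤ μ.re)
    (hgroundT : ∀ R μ, Module.End.HasEigenvalue ((Hm R) : Module.End ℂ (EuclideanSpace ℂ (Fin dim)))
      (μ : ℂ) → ∀ hμ : μ.im = 0, lamT R ≤ μ.re)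
    (hsimpleH : ∀ R, |R - R₀| < δ → Module.finrank ℂ
      (Module.End.eigenspace ((H R) : Module.End ℂ (EuclideanSpace ℂ (Fin dim))) (lamH R : ℂ)) = 1)
    (hsimpleT : ∀ R, |R - R₀| < δ → Module.finrank ℂ
      (Module.End.eigenspace ((Hm R) : Module.End ℂ (EuclideanSpace ℂ (Fin dim))) (lamT R : ℂ)) = 1)
    (hgaugeψ : ∀ R, (⟪ψ₀ R, deriv ψ₀ R⟫).im = 0)
    (hgaugeφ : ∀ R, (⟪φ R, deriv φ R⟫).im = 0)
    (hphase : φ R₀ = ψ₀ R₀) :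
    ∀ p < n, iteratedDeriv p φ R₀ = iteratedDeriv p ψ₀ R₀ := by
  -- downgrade smoothness from ω to ∞
  have hH' : ContDiff ℝ ∞ H := hH.of_le (by simp)
  have hψ : ContDiff ℝ ∞ ψ₀ := hψ₀.of_le (by simp)
  have hφ' : ContDiff ℝ ∞ φ := hφ.of_le (by simp)
  -- Hm is a polynomial, hence smooth, with matching derivatives at R₀
  have hHmfun : Hm = fun R => ∑ k ∈ Finset.range n,
      ((R - R₀) ^ k / (k.factorial : ℝ)) • iteratedDeriv k H R₀ := funext hHm
  have hsj : ∀ j : ℕ, ContDiff ℝ ∞ (fun R : ℝ => (R - R₀) ^ j / (j.factorial : ℝ)) :=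
    fun j => ((contDiff_id.sub contDiff_const).pow j).div_const _
  have hHm' : ContDiff ℝ ∞ Hm := by
    rw [hHmfun]
    exact ContDiff.sum fun j _ => (hsj j).smul contDiff_const
  have hHd : ∀ k, k < n → iteratedDeriv k Hm R₀ = iteratedDeriv k H R₀ := by
    intro k hk
    rw [hHmfun, iteratedDeriv_finset_sum _
      (f := fun j R => ((R - R₀) ^ j / (j.factorial : ℝ)) • iteratedDeriv j H R₀)
      (fun j _ => (hsj j).smul contDiff_const)]
    have hterm : ∀ j ∈ Finset.range n,
        iteratedDeriv k (fun R => ((R - R₀) ^ j / (j.factorial : ℝ)) • iteratedDeriv j H R₀) R₀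
          = (if k = j then iteratedDeriv j H R₀ else 0) := by
      intro j _
      rw [iteratedDeriv_smul_const' (hsj j)]
      have hval : iteratedDeriv k (fun R : ℝ => (R - R₀) ^ j / (j.factorial : ℝ)) R₀
          = if k = j then 1 else 0 := by
        have hdiv : (fun R : ℝ => (R - R₀) ^ j / (j.factorial : ℝ))
            = fun R => ((j.factorial : ℝ))⁻¹ * (R - R₀) ^ j := by funext R; ring
        rw [hdiv]
        have hcl := iteratedDeriv_clm_comp_left
          ((((j.factorial : ℝ))⁻¹) • ContinuousLinearMap.id ℝ ℝ)
          (f := fun R : ℝ => (R - R₀) ^ j)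
          ((contDiff_id.sub contDiff_const).pow j) k R₀
        simp only [ContinuousLinearMap.smul_apply, ContinuousLinearMap.id_apply,
          smul_eq_mul] at hcl
        rw [hcl, iteratedDeriv_centered_pow]
        split
        · field_simp
        · simp
      rw [hval]
      split <;> simp
    rw [Finset.sum_congr rfl hterm, Finset.sum_ite_eq]
    simp [Finset.mem_range, hk]
  -- the eigenvalues as smooth complex functions
  set Λ : ℝ → ℂ := fun R => ⟪ψ₀ R, (H R) (ψ₀ R)⟫ with hΛdef
  set M : ℝ → ℂ := fun R => ⟪φ R, (Hm R) (φ R)⟫ with hMdef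
  have hinner_selfψ : ∀ R, ⟪ψ₀ R, ψ₀ R⟫ = (1 : ℂ) := fun R => by
    rw [inner_self_eq_norm_sq_to_K, hψ₀norm]; norm_num
  have hinner_selfφ : ∀ R, ⟪φ R, φ R⟫ = (1 : ℂ) := fun R => by
    rw [inner_self_eq_norm_sq_to_K, hφnorm]; norm_num
  have hΛ : ∀ R, Λ R = (lamH R : ℂ) := fun R => by
    show ⟪ψ₀ R, (H R) (ψ₀ R)⟫ = (lamH R : ℂ)
    rw [heigH R, inner_smul_right, hinner_selfψ R, mul_one]
  have hM : ∀ R, M R = (lamT R : ℂ) := fun R => by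
    show ⟪φ R, (Hm R) (φ R)⟫ = (lamT R : ℂ)
    rw [heigT R, inner_smul_right, hinner_selfφ R, mul_one]
  have happlyC : ∀ (A : ℝ → EuclideanSpace ℂ (Fin dim) →L[ℂ] EuclideanSpace ℂ (Fin dim)) (v : ℝ → EuclideanSpace ℂ (Fin dim)), ContDiff ℝ ∞ A → ContDiff ℝ ∞ v →
      ContDiff ℝ ∞ (fun R => clmApplyR (EuclideanSpace ℂ (Fin dim)) (A R) (v R)) := fun A v hA hv =>
    ((clmApplyR (EuclideanSpace ℂ (Fin dim))).isBoundedBilinearMap.contDiff).comp (ContDiff.prodMk hA hv)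
  have hΛc : ContDiff ℝ ∞ Λ := ContDiff.inner ℂ hψ (happlyC H ψ₀ hH' hψ)
  have hMc : ContDiff ℝ ∞ M := ContDiff.inner ℂ hφ' (happlyC Hm φ hHm' hφ')
  -- eigen equations as function identities
  have heigΛ : (fun R => clmApplyR (EuclideanSpace ℂ (Fin dim)) (H R) (ψ₀ R)) = fun R => smulR (EuclideanSpace ℂ (Fin dim)) (Λ R) (ψ₀ R) := by
    funext R
    simp only [clmApplyR_apply, smulR_apply]
    rw [heigH R, hΛ R]
  have heigM : (fun R => clmApplyR (EuclideanSpace ℂ (Fin dim)) (Hm R) (φ R)) = fun R => smulR (EuclideanSpace ℂ (Fin dim)) (M R) (φ R) := by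
    funext R
    simp only [clmApplyR_apply, smulR_apply]
    rw [heigT R, hM R]
  -- derivative of symmetric at R₀
  have hsym := (hHerm R₀).isSymmetric
  have hv0ne : ψ₀ R₀ ≠ 0 := by
    intro h
    have h1 := hψ₀norm R₀
    rw [h, norm_zero] at h1
    norm_num at h1
  -- the eigenspace at R₀ is spanned by ψ₀ R₀
  have hv0mem : ψ₀ R₀ ∈ Module.End.eigenspace
      ((H R₀) : Module.End ℂ (EuclideanSpace ℂ (Fin dim))) ((lamH R₀ : ℂ)) := by
    rw [Module.End.mem_eigenspace_iff]
    simpa using heigH R₀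
  have hspan : Submodule.span ℂ {ψ₀ R₀} = Module.End.eigenspace
      ((H R₀) : Module.End ℂ (EuclideanSpace ℂ (Fin dim))) ((lamH R₀ : ℂ)) := by
    apply Submodule.eq_of_le_of_finrank_le
    · exact (Submodule.span_singleton_le_iff_mem _ _).2 hv0mem
    · rw [hsimpleH R₀ (by simpa using hδ), finrank_span_singleton hv0ne]
  -- gauge conditions for iterated derivatives
  have hgauge : ∀ (X : ℝ → EuclideanSpace ℂ (Fin dim)), ContDiff ℝ ∞ X → (∀ R, (⟪X R, deriv X R⟫).im = 0) →
      ∀ (j : ℕ), (iteratedDeriv j (fun R => innerR (EuclideanSpace ℂ (Fin dim)) (X R) (deriv X R)) R₀).im = 0 := by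
    intro X hX hg j
    have hX' : ContDiff ℝ ∞ (deriv X) := (contDiff_infty_iff_deriv.1 hX).2
    have hsm : ContDiff ℝ ∞ (fun R => innerR (EuclideanSpace ℂ (Fin dim)) (X R) (deriv X R)) :=
      ContDiff.inner ℂ hX hX'
    have h1 := iteratedDeriv_clm_comp_left Complex.imCLM hsm j R₀
    have h2 : (fun y => Complex.imCLM ((fun R => innerR (EuclideanSpace ℂ (Fin dim)) (X R) (deriv X R)) y))
        = fun _ : ℝ => (0 : ℝ) := by
      funext y
      simpa using hg y
    rw [h2, iteratedDeriv_const_fun] at h1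
    have h3 : Complex.imCLM (iteratedDeriv j (fun R => innerR (EuclideanSpace ℂ (Fin dim)) (X R) (deriv X R)) R₀) = 0 := by
      rw [← h1]; split <;> rfl
    simpa using h3
  -- main induction
  have main : ∀ p, p < n → (iteratedDeriv p φ R₀ = iteratedDeriv p ψ₀ R₀ ∧
      iteratedDeriv p M R₀ = iteratedDeriv p Λ R₀) := by
    intro p
    induction p using Nat.strong_induction_on with
    | _ p IH =>
      intro hpn
      rcases p with _ | q
      · refine ⟨by simpa using hphase, ?_⟩
        simp only [iteratedDeriv_zero]
        show ⟪φ R₀, (Hm R₀) (φ R₀)⟫ = ⟪ψ₀ R₀, (H R₀) (ψ₀ R₀)⟫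
        have h0 : Hm R₀ = H R₀ := by
          have := hHd 0 (by omega)
          simpa using this
        rw [hphase, h0]
      · -- p = q + 1
        have hq1n : q + 1 < n := hpn
        -- Leibniz expansion of the two eigen-equations at R₀
        have eqψ : ∑ k ∈ Finset.range (q + 2), ((q+1).choose k : ℝ) •
              (iteratedDeriv k H R₀) (iteratedDeriv (q+1-k) ψ₀ R₀)
            = ∑ k ∈ Finset.range (q + 2), ((q+1).choose k : ℝ) •
              (iteratedDeriv k Λ R₀) • (iteratedDeriv (q+1-k) ψ₀ R₀) := by
          have h1 := iteratedDeriv_bilinear (clmApplyR (EuclideanSpace ℂ (Fin dim))) hH' hψ (q+1) R₀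
          have h2 := iteratedDeriv_bilinear (smulR (EuclideanSpace ℂ (Fin dim))) hΛc hψ (q+1) R₀
          rw [heigΛ] at h1
          have h3 := h1.symm.trans h2
          simpa using h3
        have eqφ : ∑ k ∈ Finset.range (q + 2), ((q+1).choose k : ℝ) •
              (iteratedDeriv k Hm R₀) (iteratedDeriv (q+1-k) φ R₀)
            = ∑ k ∈ Finset.range (q + 2), ((q+1).choose k : ℝ) •
              (iteratedDeriv k M R₀) • (iteratedDeriv (q+1-k) φ R₀) := by
          have h1 := iteratedDeriv_bilinear (clmApplyR (EuclideanSpace ℂ (Fin dim))) hHm' hφ' (q+1) R₀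
          have h2 := iteratedDeriv_bilinear (smulR (EuclideanSpace ℂ (Fin dim))) hMc hφ' (q+1) R₀
          rw [heigM] at h1
          have h3 := h1.symm.trans h2
          simpa using h3
        have hM0 : M R₀ = Λ R₀ := by
          have := (IH 0 (by omega) (by omega)).2
          simpa using this
        have hφ0 : φ R₀ = ψ₀ R₀ := hphase
        -- peel the sums
        have peel1 : ∑ k ∈ Finset.range (q + 2), ((q+1).choose k : ℝ) •
              (iteratedDeriv k H R₀) (iteratedDeriv (q+1-k) ψ₀ R₀)
            = (H R₀) (iteratedDeriv (q+1) ψ₀ R₀)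
              + ∑ k ∈ Finset.range (q+1), ((q+1).choose (k+1) : ℝ) •
                (iteratedDeriv (k+1) H R₀) (iteratedDeriv (q-k) ψ₀ R₀) := by
          rw [Finset.sum_range_succ']
          simp only [Nat.add_sub_add_right, Nat.choose_zero_right, Nat.cast_one, one_smul,
            Nat.sub_zero, iteratedDeriv_zero]
          rw [add_comm]
        have peel3 : ∑ k ∈ Finset.range (q + 2), ((q+1).choose k : ℝ) •
              (iteratedDeriv k Hm R₀) (iteratedDeriv (q+1-k) φ R₀)
            = (H R₀) (iteratedDeriv (q+1) φ R₀)
              + ∑ k ∈ Finset.range (q+1), ((q+1).choose (k+1) : ℝ) •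
                (iteratedDeriv (k+1) H R₀) (iteratedDeriv (q-k) ψ₀ R₀) := by
          rw [Finset.sum_range_succ']
          simp only [Nat.add_sub_add_right, Nat.choose_zero_right, Nat.cast_one, one_smul,
            Nat.sub_zero, iteratedDeriv_zero]
          rw [add_comm]
          have h0 : Hm R₀ = H R₀ := by simpa using hHd 0 (by omega)
          rw [h0]
          congr 1
          refine Finset.sum_congr rfl fun k hk => ?_
          rw [Finset.mem_range] at hk
          rw [hHd (k+1) (by omega), (IH (q-k) (by omega) (by omega)).1]
        have peel2 : ∑ k ∈ Finset.range (q + 2), ((q+1).choose k : ℝ) •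
              (iteratedDeriv k Λ R₀) • (iteratedDeriv (q+1-k) ψ₀ R₀)
            = (Λ R₀) • iteratedDeriv (q+1) ψ₀ R₀
              + ((∑ k ∈ Finset.range q, ((q+1).choose (k+1) : ℝ) •
                  (iteratedDeriv (k+1) Λ R₀) • (iteratedDeriv (q-k) ψ₀ R₀))
                + (iteratedDeriv (q+1) Λ R₀) • ψ₀ R₀) := by
          rw [Finset.sum_range_succ, Finset.sum_range_succ']
          simp only [Nat.add_sub_add_right, Nat.choose_zero_right, Nat.cast_one, one_smul,
            Nat.sub_zero, Nat.sub_self, Nat.choose_self, iteratedDeriv_zero]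
          abel
        have peel4 : ∑ k ∈ Finset.range (q + 2), ((q+1).choose k : ℝ) •
              (iteratedDeriv k M R₀) • (iteratedDeriv (q+1-k) φ R₀)
            = (Λ R₀) • iteratedDeriv (q+1) φ R₀
              + ((∑ k ∈ Finset.range q, ((q+1).choose (k+1) : ℝ) •
                  (iteratedDeriv (k+1) Λ R₀) • (iteratedDeriv (q-k) ψ₀ R₀))
                + (iteratedDeriv (q+1) M R₀) • ψ₀ R₀) := by
          rw [Finset.sum_range_succ, Finset.sum_range_succ']
          simp only [Nat.add_sub_add_right, Nat.choose_zero_right, Nat.cast_one, one_smul,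
            Nat.sub_zero, Nat.sub_self, Nat.choose_self, iteratedDeriv_zero]
          rw [hM0, hφ0]
          have hmid : ∀ k ∈ Finset.range q, ((q+1).choose (k+1) : ℝ) •
                (iteratedDeriv (k+1) M R₀) • (iteratedDeriv (q-k) φ R₀)
              = ((q+1).choose (k+1) : ℝ) •
                (iteratedDeriv (k+1) Λ R₀) • (iteratedDeriv (q-k) ψ₀ R₀) := by
            intro k hk
            rw [Finset.mem_range] at hk
            rw [(IH (k+1) (by omega) (by omega)).2, (IH (q-k) (by omega) (by omega)).1]
          rw [Finset.sum_congr rfl hmid]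
          abel
        have E1 := peel1.symm.trans (eqψ.trans peel2)
        have E2 := peel3.symm.trans (eqφ.trans peel4)
        have hkey : (H R₀) (iteratedDeriv (q+1) φ R₀ - iteratedDeriv (q+1) ψ₀ R₀)
            = (Λ R₀) • (iteratedDeriv (q+1) φ R₀ - iteratedDeriv (q+1) ψ₀ R₀)
              + (iteratedDeriv (q+1) M R₀ - iteratedDeriv (q+1) Λ R₀) • ψ₀ R₀ := by
          rw [map_sub, smul_sub, sub_smul]
          rw [eq_sub_of_add_eq E2, eq_sub_of_add_eq E1]
          abel
        have hΛreal : Λ R₀ = (lamH R₀ : ℂ) := hΛ R₀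
        have hc0 : iteratedDeriv (q+1) M R₀ - iteratedDeriv (q+1) Λ R₀ = 0 := by
          have h1 : ⟪ψ₀ R₀, (H R₀) (iteratedDeriv (q+1) φ R₀ - iteratedDeriv (q+1) ψ₀ R₀)⟫
              = (Λ R₀) * ⟪ψ₀ R₀, iteratedDeriv (q+1) φ R₀ - iteratedDeriv (q+1) ψ₀ R₀⟫ := by
            have hs := hsym (ψ₀ R₀) (iteratedDeriv (q+1) φ R₀ - iteratedDeriv (q+1) ψ₀ R₀)
            simp only [ContinuousLinearMap.coe_coe] at hs
            rw [← hs, heigH R₀, inner_smul_left, Complex.conj_ofReal, hΛreal]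
          have h2 : ⟪ψ₀ R₀, (H R₀) (iteratedDeriv (q+1) φ R₀ - iteratedDeriv (q+1) ψ₀ R₀)⟫
              = (Λ R₀) * ⟪ψ₀ R₀, iteratedDeriv (q+1) φ R₀ - iteratedDeriv (q+1) ψ₀ R₀⟫
                + (iteratedDeriv (q+1) M R₀ - iteratedDeriv (q+1) Λ R₀) := by
            rw [hkey, inner_add_right, inner_smul_right, inner_smul_right, hinner_selfψ R₀,
              mul_one]
          linear_combination h1 - h2
        have huspan : (iteratedDeriv (q+1) φ R₀ - iteratedDeriv (q+1) ψ₀ R₀)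
            ∈ Submodule.span ℂ {ψ₀ R₀} := by
          rw [hspan]
          simp only [Module.End.mem_eigenspace_iff, ContinuousLinearMap.coe_coe]
          rw [hkey, hc0, zero_smul, add_zero, hΛreal]
        -- real parts via normalization
        have hNorm : ∀ (X : ℝ → EuclideanSpace ℂ (Fin dim)), ContDiff ℝ ∞ X →
            (∀ R, ⟪X R, X R⟫ = (1 : ℂ)) →
            ∑ k ∈ Finset.range (q+2), ((q+1).choose k : ℝ) •
              (⟪iteratedDeriv k X R₀, iteratedDeriv (q+1-k) X R₀⟫ : ℂ) = 0 := by
          intro X hX hXn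
          have h1 := iteratedDeriv_bilinear (innerR (EuclideanSpace ℂ (Fin dim))) hX hX (q+1) R₀
          have h2 : (fun R => innerR (EuclideanSpace ℂ (Fin dim)) (X R) (X R))
              = fun _ : ℝ => (1 : ℂ) := funext fun R => by simpa using hXn R
          rw [h2, iteratedDeriv_const_fun, if_neg (by omega)] at h1
          simp only [innerR_apply] at h1
          exact h1.symm
        have hNψ := hNorm ψ₀ hψ hinner_selfψ
        have hNφ := hNorm φ hφ' hinner_selfφ
        rw [Finset.sum_range_succ, Finset.sum_range_succ'] at hNψ hNφ
        simp only [Nat.add_sub_add_right, Nat.choose_zero_right, Nat.cast_one, one_smul,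
          Nat.sub_zero, Nat.sub_self, Nat.choose_self, iteratedDeriv_zero] at hNψ hNφ
        rw [hφ0] at hNφ
        have hmidN : ∀ k ∈ Finset.range q, ((q+1).choose (k+1) : ℝ) •
              (⟪iteratedDeriv (k+1) φ R₀, iteratedDeriv (q-k) φ R₀⟫ : ℂ)
            = ((q+1).choose (k+1) : ℝ) •
              (⟪iteratedDeriv (k+1) ψ₀ R₀, iteratedDeriv (q-k) ψ₀ R₀⟫ : ℂ) := by
          intro k hk
          rw [Finset.mem_range] at hk
          rw [(IH (k+1) (by omega) (by omega)).1, (IH (q-k) (by omega) (by omega)).1]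
        rw [Finset.sum_congr rfl hmidN] at hNφ
        have hre : ⟪ψ₀ R₀, iteratedDeriv (q+1) φ R₀⟫ + ⟪iteratedDeriv (q+1) φ R₀, ψ₀ R₀⟫
            = ⟪ψ₀ R₀, iteratedDeriv (q+1) ψ₀ R₀⟫ + ⟪iteratedDeriv (q+1) ψ₀ R₀, ψ₀ R₀⟫ := by
          linear_combination hNφ - hNψ
        -- imaginary parts via gauge
        have hexp : ∀ (X : ℝ → EuclideanSpace ℂ (Fin dim)), ContDiff ℝ ∞ X →
            iteratedDeriv q (fun R => innerR (EuclideanSpace ℂ (Fin dim)) (X R) (deriv X R)) R₀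
              = ∑ k ∈ Finset.range (q+1), (q.choose k : ℝ) •
                (⟪iteratedDeriv k X R₀, iteratedDeriv (q-k+1) X R₀⟫ : ℂ) := by
          intro X hX
          have h1 := iteratedDeriv_bilinear (innerR (EuclideanSpace ℂ (Fin dim))) hX
            (contDiff_infty_iff_deriv.1 hX).2 q R₀
          rw [h1]
          simp only [innerR_apply]
          refine Finset.sum_congr rfl fun k hk => ?_
          rw [← iteratedDeriv_succ']
        have hGexpψ : iteratedDeriv q
              (fun R => innerR (EuclideanSpace ℂ (Fin dim)) (ψ₀ R) (deriv ψ₀ R)) R₀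
            = ⟪ψ₀ R₀, iteratedDeriv (q+1) ψ₀ R₀⟫ + ∑ k ∈ Finset.range q, (q.choose (k+1) : ℝ) •
                (⟪iteratedDeriv (k+1) ψ₀ R₀, iteratedDeriv (q-k) ψ₀ R₀⟫ : ℂ) := by
          rw [hexp ψ₀ hψ, Finset.sum_range_succ']
          simp only [Nat.choose_zero_right, Nat.cast_one, one_smul, Nat.sub_zero,
            iteratedDeriv_zero]
          rw [add_comm]
          congr 1
          refine Finset.sum_congr rfl fun k hk => ?_
          rw [Finset.mem_range] at hk
          rw [show q - (k+1) + 1 = q - k from by omega]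
        have hGexpφ : iteratedDeriv q
              (fun R => innerR (EuclideanSpace ℂ (Fin dim)) (φ R) (deriv φ R)) R₀
            = ⟪ψ₀ R₀, iteratedDeriv (q+1) φ R₀⟫ + ∑ k ∈ Finset.range q, (q.choose (k+1) : ℝ) •
                (⟪iteratedDeriv (k+1) ψ₀ R₀, iteratedDeriv (q-k) ψ₀ R₀⟫ : ℂ) := by
          rw [hexp φ hφ', Finset.sum_range_succ']
          simp only [Nat.choose_zero_right, Nat.cast_one, one_smul, Nat.sub_zero,
            iteratedDeriv_zero]
          rw [add_comm, hφ0]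
          congr 1
          refine Finset.sum_congr rfl fun k hk => ?_
          rw [Finset.mem_range] at hk
          rw [show q - (k+1) + 1 = q - k from by omega, (IH (k+1) (by omega) (by omega)).1,
            (IH (q-k) (by omega) (by omega)).1]
        have hGψ0 := hgauge ψ₀ hψ hgaugeψ q
        have hGφ0 := hgauge φ hφ' hgaugeφ q
        rw [hGexpψ] at hGψ0
        rw [hGexpφ] at hGφ0
        simp only [Complex.add_im] at hGψ0 hGφ0
        have him : (⟪ψ₀ R₀, iteratedDeriv (q+1) φ R₀⟫ : ℂ).im
            = (⟪ψ₀ R₀, iteratedDeriv (q+1) ψ₀ R₀⟫ : ℂ).im := by linarith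
        rw [← inner_conj_symm (iteratedDeriv (q+1) φ R₀) (ψ₀ R₀),
          ← inner_conj_symm (iteratedDeriv (q+1) ψ₀ R₀) (ψ₀ R₀)] at hre
        have hrr : (⟪ψ₀ R₀, iteratedDeriv (q+1) φ R₀⟫ : ℂ)
            = ⟪ψ₀ R₀, iteratedDeriv (q+1) ψ₀ R₀⟫ := by
          apply Complex.ext
          · have h := congrArg Complex.re hre
            simp only [Complex.add_re, Complex.conj_re] at h
            linarith
          · exact him
        have hinneru : (⟪ψ₀ R₀, iteratedDeriv (q+1) φ R₀ - iteratedDeriv (q+1) ψ₀ R₀⟫ : ℂ)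
            = 0 := by
          rw [inner_sub_right, hrr, sub_self]
        obtain ⟨a, ha⟩ := Submodule.mem_span_singleton.1 huspan
        have ha0 : a = 0 := by
          rw [← ha, inner_smul_right, hinner_selfψ R₀, mul_one] at hinneru
          exact hinneru
        have hu0 : iteratedDeriv (q+1) φ R₀ - iteratedDeriv (q+1) ψ₀ R₀ = 0 := by
          rw [← ha, ha0, zero_smul]
        exact ⟨sub_eq_zero.1 hu0, sub_eq_zero.1 hc0⟩
  intro p hp
  exact (main p hp).1
end
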